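/- arXiv:1309.5996 — 2 statements merged into one kernel-verified Lean document; each statement's English description precedes it below -/
import Mathlib

section
/- Let f : S → E be a strictly increasing function from a set of epsilon numbers into the epsilon numbers, let α ∈ S be an epsilon number, and let x be an ordinal with Ep(x) ⊆ S. Let α⁺ denote the least epsilon number greater than α, and similarly f(α)⁺ the least epsilon number greater than f(α). Then x ∈ [α, α⁺) if and only if x[f] ∈ [f(α), f(α)⁺). -/
/-!
Both conditions say that `α` is the largest element of `Ep x`. Epsilon numbers are closed under
`ω ^ a * n` (`n < ω`) and finite sums, so `x[f] < γ` for an epsilon `γ` as soon as `f e < γ` for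
every `e ∈ Ep x`; conversely `f e ≤ x[f]` for each `e ∈ Ep x`. With `f` strictly monotone this gives
`f α ≤ x[f] ↔ ∃ e ∈ Ep x, α ≤ e` and `x[f] < f(α)⁺ ↔ ∀ e ∈ Ep x, e ≤ α`. Since `x[id] = x`
(the Cantor normal form reassembles `x`), the case `f = id` handles the left-hand side.
-/

open Ordinal

/-- An ordinal is an epsilon number if it is a fixed point of `ω ^ ·`. -/
def IsEpsilon (x : Ordinal.{0}) : Prop := ω ^ x = x

theorem cnf_fst_lt {x : Ordinal.{0}} (h : ¬ ω ^ x = x) {p : Ordinal × Ordinal}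
    (hp : p ∈ CNF ω x) : p.1 < x := by
  have hx : x ≠ 0 := by
    rintro rfl
    simp [Ordinal.CNF.zero_right] at hp
  have h1 : p.1 ≤ Ordinal.log ω x := Ordinal.CNF.fst_le_log hp
  have h2 : Ordinal.log ω x < x := by
    rcases lt_or_eq_of_le (Ordinal.log_le_self ω x) with h' | h'
    · exact h'
    · exfalso
      have hle := Ordinal.opow_log_le_self ω hx
      rw [h'] at hle
      exact h (le_antisymm hle (Ordinal.right_le_opow x one_lt_omega0))
  exact lt_of_le_of_lt h1 h2

open scoped Classical in
/-- The set of epsilon numbers occurring hereditarily in the Cantor normal form of `x`. -/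
noncomputable def Ep (x : Ordinal.{0}) : Set Ordinal.{0} :=
  if h : ω ^ x = x then {x}
  else ⋃ p : {q // q ∈ CNF ω x}, Ep p.1.1
termination_by x
decreasing_by exact cnf_fst_lt h p.2

open scoped Classical in
/-- Simultaneous substitution of the epsilon numbers occurring hereditarily in the
Cantor normal form of `x` by their values under `f`. -/
noncomputable def subst (f : Ordinal.{0} → Ordinal.{0}) (x : Ordinal.{0}) : Ordinal.{0} :=
  if h : ω ^ x = x then f x
  else (((CNF ω x).attach).map (fun p => ω ^ subst f p.1.1 * p.1.2)).sum
termination_by x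
decreasing_by exact cnf_fst_lt h p.2

theorem Ordinal.IsPrincipal.list_sum_lt {o : Ordinal} (ho : IsPrincipal (· + ·) o) (ho₀ : 0 < o)
    {l : List Ordinal} (hl : ∀ a ∈ l, a < o) : l.sum < o := by
  induction l with
  | nil => simpa using ho₀
  | cons a l ih =>
    simp only [List.mem_cons, forall_eq_or_imp] at hl
    exact ho hl.1 (ih hl.2)

namespace IsEpsilon

variable {γ : Ordinal.{0}}

theorem pos (hγ : IsEpsilon γ) : 0 < γ := by
  rw [← (hγ : ω ^ γ = γ)]
  exact opow_pos γ omega0_pos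

theorem isPrincipal_add (hγ : IsEpsilon γ) : IsPrincipal (· + ·) γ := by
  rw [← (hγ : ω ^ γ = γ)]
  exact isPrincipal_add_omega0_opow γ

theorem opow_mul_lt (hγ : IsEpsilon γ) {a n : Ordinal} (ha : a < γ) (hn : n < ω) :
    ω ^ a * n < γ :=
  (hγ : ω ^ γ = γ) ▸ opow_mul_lt_opow hn ha

theorem exists_gt (β : Ordinal.{0}) : ∃ γ, IsEpsilon γ ∧ β < γ :=
  ⟨nfp (ω ^ ·) (β + 1), nfp_fp (isNormal_opow one_lt_omega0) _,
    (lt_add_one β).trans_le (le_nfp _ _)⟩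

end IsEpsilon

section Substitution

variable {f : Ordinal.{0} → Ordinal.{0}} {x : Ordinal.{0}}

theorem Ep_of_isEpsilon (h : IsEpsilon x) : Ep x = {x} := by
  rw [Ep]
  exact dif_pos h

theorem Ep_of_not_isEpsilon (h : ¬IsEpsilon x) :
    Ep x = ⋃ p : {q // q ∈ CNF ω x}, Ep p.1.1 := by
  rw [Ep]
  exact dif_neg h

theorem subst_of_isEpsilon (h : IsEpsilon x) : subst f x = f x := by
  rw [subst]
  exact dif_pos h

theorem subst_of_not_isEpsilon (h : ¬IsEpsilon x) :
    subst f x = ((CNF ω x).attach.map fun p => ω ^ subst f p.1.1 * p.1.2).sum := by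
  rw [subst]
  exact dif_neg h

theorem mem_Ep_self (h : IsEpsilon x) : x ∈ Ep x := by
  rw [Ep_of_isEpsilon h]
  rfl

theorem Ep_subset_of_mem_CNF (h : ¬IsEpsilon x) {p : Ordinal × Ordinal} (hp : p ∈ CNF ω x) :
    Ep p.1 ⊆ Ep x := by
  rw [Ep_of_not_isEpsilon h]
  exact Set.subset_iUnion (fun q : {q // q ∈ CNF ω x} => Ep q.1.1) ⟨p, hp⟩

theorem subst_id (x : Ordinal.{0}) : subst id x = x := by
  induction x using WellFoundedLT.induction with
  | _ x ih =>
    by_cases h : IsEpsilon x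
    · exact subst_of_isEpsilon h
    rw [subst_of_not_isEpsilon h]
    calc _ = ((CNF ω x).attach.map fun p => ω ^ p.1.1 * p.1.2).sum := by
          congr 1
          exact List.map_congr_left fun p _ => by rw [ih _ (cnf_fst_lt h p.2)]
      _ = ((CNF ω x).map fun p => ω ^ p.1 * p.2).sum :=
          congrArg List.sum (List.attach_map_val (f := fun p : Ordinal × Ordinal => ω ^ p.1 * p.2))
      _ = x := by
          rw [List.sum, List.foldr_map]
          exact CNF.foldr ω x

theorem le_subst_of_mem_Ep {e : Ordinal.{0}} (he : e ∈ Ep x) : f e ≤ subst f x := by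
  induction x using WellFoundedLT.induction with
  | _ x ih =>
    by_cases h : IsEpsilon x
    · rw [Ep_of_isEpsilon h, Set.mem_singleton_iff] at he
      rw [subst_of_isEpsilon h, he]
    rw [Ep_of_not_isEpsilon h] at he
    obtain ⟨⟨p, hp⟩, hpe⟩ := Set.mem_iUnion.1 he
    rw [subst_of_not_isEpsilon h]
    calc f e ≤ subst f p.1 := ih _ (cnf_fst_lt h hp) hpe
      _ ≤ ω ^ subst f p.1 := right_le_opow _ one_lt_omega0
      _ ≤ ω ^ subst f p.1 * p.2 := le_mul_left _ (CNF.snd_pos hp)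
      _ ≤ _ := List.le_sum_of_mem (List.mem_map.2 ⟨⟨p, hp⟩, List.mem_attach _ _, rfl⟩)

theorem subst_lt_of_forall_mem_Ep {γ : Ordinal.{0}} (hγ : IsEpsilon γ)
    (hx : ∀ e ∈ Ep x, f e < γ) : subst f x < γ := by
  induction x using WellFoundedLT.induction with
  | _ x ih =>
    by_cases h : IsEpsilon x
    · rw [subst_of_isEpsilon h]
      exact hx x (mem_Ep_self h)
    rw [subst_of_not_isEpsilon h]
    refine hγ.isPrincipal_add.list_sum_lt hγ.pos fun a ha => ?_
    obtain ⟨⟨p, hp⟩, -, rfl⟩ := List.mem_map.1 ha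
    refine hγ.opow_mul_lt (ih _ (cnf_fst_lt h hp) fun e he => ?_) (CNF.snd_lt one_lt_omega0 hp)
    exact hx e (Ep_subset_of_mem_CNF h hp he)

end Substitution

section Interval

variable {S : Set Ordinal.{0}} {f : Ordinal.{0} → Ordinal.{0}} {α x : Ordinal.{0}}

theorem le_subst_iff_exists_mem_Ep (hf : StrictMonoOn f S) (hα : α ∈ S)
    (hfα : IsEpsilon (f α)) (hx : Ep x ⊆ S) : f α ≤ subst f x ↔ ∃ e ∈ Ep x, α ≤ e := by
  refine ⟨fun h => ?_, fun ⟨e, he, hαe⟩ =>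
    (hf.monotoneOn hα (hx he) hαe).trans (le_subst_of_mem_Ep he)⟩
  by_contra! hlt
  exact h.not_gt (subst_lt_of_forall_mem_Ep hfα fun e he => hf (hx he) hα (hlt e he))

theorem subst_lt_sInf_iff_forall_mem_Ep (hf : StrictMonoOn f S) (hα : α ∈ S)
    (hfE : ∀ e ∈ S, IsEpsilon (f e)) (hx : Ep x ⊆ S) :
    subst f x < sInf {e | IsEpsilon e ∧ f α < e} ↔ ∀ e ∈ Ep x, e ≤ α := by
  set B := sInf {e | IsEpsilon e ∧ f α < e}
  obtain ⟨hB, hfα_lt⟩ : IsEpsilon B ∧ f α < B := csInf_mem (IsEpsilon.exists_gt (f α))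
  refine ⟨fun h e he => ?_, fun h => ?_⟩
  · by_contra! hαe
    have hB_le : B ≤ f e := csInf_le' ⟨hfE e (hx he), hf hα (hx he) hαe⟩
    exact h.not_ge (hB_le.trans (le_subst_of_mem_Ep he))
  · exact subst_lt_of_forall_mem_Ep hB fun e he =>
      (hf.monotoneOn (hx he) hα (h e he)).trans_lt hfα_lt

theorem subst_mem_Ico_iff_isGreatest (hf : StrictMonoOn f S) (hα : α ∈ S)
    (hfE : ∀ e ∈ S, IsEpsilon (f e)) (hx : Ep x ⊆ S) :
    subst f x ∈ Set.Ico (f α) (sInf {e | IsEpsilon e ∧ f α < e}) ↔ IsGreatest (Ep x) α := by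
  rw [Set.mem_Ico, le_subst_iff_exists_mem_Ep hf hα (hfE α hα) hx,
    subst_lt_sInf_iff_forall_mem_Ep hf hα hfE hx]
  constructor
  · rintro ⟨⟨e, he, hαe⟩, hle⟩
    exact ⟨(hle e he).antisymm hαe ▸ he, hle⟩
  · exact fun h => ⟨⟨α, h.1, le_rfl⟩, h.2⟩

end Interval

theorem stmt5 (S : Set Ordinal.{0}) (f : Ordinal → Ordinal)
    (hS : ∀ e ∈ S, IsEpsilon e) (hfE : ∀ e ∈ S, IsEpsilon (f e))
    (hf : StrictMonoOn f S)
    (α : Ordinal) (hα : α ∈ S)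
    (x : Ordinal) (hx : Ep x ⊆ S) :
    (α ≤ x ∧ x < sInf {e | IsEpsilon e ∧ α < e}) ↔
      (f α ≤ subst f x ∧ subst f x < sInf {e | IsEpsilon e ∧ f α < e}) := by
  have hx_id := subst_mem_Ico_iff_isGreatest strictMonoOn_id hα hS hx
  rw [subst_id] at hx_id
  exact hx_id.trans (subst_mem_Ico_iff_isGreatest hf hα hfE hx).symm
end

section
/- Let f : S → E be a strictly increasing function from a set S of epsilon numbers into the epsilon numbers, and let x, y be ordinals with Ep(x) ∪ Ep(y) ⊆ S. Then Ep(x + y) ⊆ S and (x + y)[f] = x[f] + y[f]. -/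
/-! Every nonzero ordinal is `ω ^ a * c + r` with `0 < c < ω` and `r < ω ^ a`, the leading term of
its Cantor normal form (for an epsilon number `x` this is `ω ^ x * 1 + 0`, so `a < x` fails there),
and `subst f` acts on it termwise: `subst f (ω ^ a * c + r) = ω ^ subst f a * c + subst f r`.
Below an element `z` of `S` everything is sent below the epsilon number `f z`; together with the
termwise formula this makes `subst f` strictly increasing on ordinals whose epsilon numbers lie in
`S`. Hence a leading term `ω ^ a * c` that is absorbed by a summand of larger leading exponent is
still absorbed after substitution, so `subst f (ω ^ a * c + y) = ω ^ subst f a * c + subst f y` for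
every `y`, and additivity follows by peeling off the leading term of `x`. -/

open Ordinal

theorem IsEpsilon.ne_zero {e : Ordinal.{0}} (he : IsEpsilon e) : e ≠ 0 := by
  rintro rfl
  simp [IsEpsilon] at he

theorem opow_le_opow_mul_add {a c : Ordinal} (r : Ordinal) (hc : c ≠ 0) :
    ω ^ a ≤ ω ^ a * c + r :=
  (le_mul_left _ (pos_iff_ne_zero.2 hc)).trans le_self_add

theorem lt_opow_mul_add {a c r : Ordinal} (hc : c ≠ 0) (hr : r < ω ^ a) :
    r < ω ^ a * c + r :=
  hr.trans_le (opow_le_opow_mul_add r hc)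

theorem exists_opow_mul_add_eq {x : Ordinal} (hx : x ≠ 0) :
    ∃ a c r : Ordinal, c ≠ 0 ∧ c < ω ∧ r < ω ^ a ∧ ω ^ a * c + r = x :=
  ⟨log ω x, x / ω ^ log ω x, x % ω ^ log ω x, (div_opow_log_pos ω hx).ne',
    div_opow_log_lt x one_lt_omega0, mod_lt x (opow_ne_zero _ omega0_ne_zero), div_add_mod x _⟩

theorem lt_of_opow_le_of_not_isEpsilon {a x : Ordinal.{0}} (hax : ω ^ a ≤ x)
    (h : ¬ IsEpsilon x) : a < x := by
  refine ((right_le_opow a one_lt_omega0).trans hax).lt_of_ne ?_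
  rintro rfl
  exact h (le_antisymm hax (right_le_opow _ one_lt_omega0))

theorem CNF_of_isEpsilon {e : Ordinal.{0}} (he : IsEpsilon e) : CNF ω e = [(e, 1)] := by
  have h := CNF.opow_mul_add one_lt_omega0 one_ne_zero one_lt_omega0 (opow_pos e omega0_pos)
  rwa [mul_one, add_zero, he, CNF.zero_right] at h

theorem Ep_of_isEpsilon_s8 {e : Ordinal.{0}} (he : IsEpsilon e) : Ep e = {e} := by
  rw [Ep, dif_pos (show ω ^ e = e from he)]

theorem subst_of_isEpsilon_s8 (f : Ordinal → Ordinal) {e : Ordinal.{0}} (he : IsEpsilon e) :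
    subst f e = f e := by
  rw [subst, dif_pos (show ω ^ e = e from he)]

theorem Ep_eq_biUnion_CNF (x : Ordinal.{0}) : Ep x = ⋃ p ∈ CNF ω x, Ep p.1 := by
  by_cases h : IsEpsilon x
  · simp [CNF_of_isEpsilon h, Ep_of_isEpsilon_s8 h]
  · rw [Ep, dif_neg (show ¬ ω ^ x = x from h), Set.iUnion_subtype]

-- At an epsilon number `x` the sum is `ω ^ f x`, which equals `subst f x = f x` only because
-- `f x` is an epsilon number too.
theorem subst_eq_sum_CNF (f : Ordinal → Ordinal) {x : Ordinal.{0}}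
    (hE : ∀ e ∈ Ep x, IsEpsilon (f e)) :
    subst f x = ((CNF ω x).map fun p => ω ^ subst f p.1 * p.2).sum := by
  by_cases h : IsEpsilon x
  · have hx : x ∈ Ep x := by simp [Ep_of_isEpsilon_s8 h]
    simpa [CNF_of_isEpsilon h, subst_of_isEpsilon_s8 f h] using (hE x hx).symm
  · rw [subst, dif_neg (show ¬ ω ^ x = x from h)]
    exact congrArg List.sum (List.attach_map_val (f := fun p : Ordinal × Ordinal => ω ^ subst f p.1 * p.2))

theorem Ep_zero : Ep 0 = ∅ := by
  simp [Ep_eq_biUnion_CNF 0, CNF.zero_right]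

theorem subst_zero (f : Ordinal → Ordinal) : subst f 0 = 0 := by
  rw [subst_eq_sum_CNF f (by simp [Ep_zero]), CNF.zero_right, List.map_nil, List.sum_nil]

theorem Ep_opow_mul_add_of_lt {a c r : Ordinal.{0}} (hc : c ≠ 0) (hcω : c < ω) (hr : r < ω ^ a) :
    Ep (ω ^ a * c + r) = Ep a ∪ Ep r := by
  rw [Ep_eq_biUnion_CNF, CNF.opow_mul_add one_lt_omega0 hc hcω hr, Ep_eq_biUnion_CNF r]
  simp

theorem Ep_subset_Ep_opow_mul_add_of_lt {a c r : Ordinal.{0}} (hcω : c < ω) (hr : r < ω ^ a) :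
    Ep r ⊆ Ep (ω ^ a * c + r) := by
  rcases eq_or_ne c 0 with rfl | hc
  · simp
  · rw [Ep_opow_mul_add_of_lt hc hcω hr]
    exact Set.subset_union_right

theorem Ep_opow_mul_add_subset {a c y : Ordinal.{0}} (hcω : c < ω) :
    Ep (ω ^ a * c + y) ⊆ Ep a ∪ Ep y := by
  rcases eq_or_ne c 0 with rfl | hc
  · simp
  rcases eq_or_ne y 0 with rfl | hy
  · rw [Ep_opow_mul_add_of_lt hc hcω (opow_pos a omega0_pos)]
  obtain ⟨b, d, s, hd, hdω, hs, rfl⟩ := exists_opow_mul_add_eq hy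
  rcases lt_trichotomy b a with hba | rfl | hab
  · rw [Ep_opow_mul_add_of_lt hc hcω (opow_mul_add_lt_opow hdω hs hba)]
  · rw [← add_assoc, ← mul_add, Ep_opow_mul_add_of_lt (by simp [hc])
      (isPrincipal_add_omega0 hcω hdω) hs, Ep_opow_mul_add_of_lt hd hdω hs]
    exact Set.union_subset_union_right _ Set.subset_union_right
  · rw [add_of_omega0_opow_le (opow_mul_lt_opow hcω hab) (opow_le_opow_mul_add s hd)]
    exact Set.subset_union_right

theorem Ep_add_subset (x y : Ordinal.{0}) : Ep (x + y) ⊆ Ep x ∪ Ep y := by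
  induction x using WellFoundedLT.induction with
  | _ x ih =>
  rcases eq_or_ne x 0 with rfl | hx
  · simp [Ep_zero]
  obtain ⟨a, c, r, hc, hcω, hr, rfl⟩ := exists_opow_mul_add_eq hx
  rw [add_assoc, Ep_opow_mul_add_of_lt hc hcω hr, Set.union_assoc]
  exact (Ep_opow_mul_add_subset hcω).trans
    (Set.union_subset_union_right _ (ih r (lt_opow_mul_add hc hr)))

section

variable {S : Set Ordinal.{0}} {f : Ordinal.{0} → Ordinal.{0}}

theorem subst_opow_mul_add_of_lt (hfE : ∀ e ∈ S, IsEpsilon (f e)) {a c r : Ordinal.{0}}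
    (ha : Ep a ⊆ S) (hrS : Ep r ⊆ S) (hcω : c < ω) (hr : r < ω ^ a) :
    subst f (ω ^ a * c + r) = ω ^ subst f a * c + subst f r := by
  rcases eq_or_ne c 0 with rfl | hc
  · simp
  have hxS : Ep (ω ^ a * c + r) ⊆ S := by
    rw [Ep_opow_mul_add_of_lt hc hcω hr]
    exact Set.union_subset ha hrS
  rw [subst_eq_sum_CNF f (fun e he => hfE e (hxS he)), CNF.opow_mul_add one_lt_omega0 hc hcω hr,
    List.map_cons, List.sum_cons, ← subst_eq_sum_CNF f (fun e he => hfE e (hrS he))]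

theorem subst_lt_apply_of_lt (hfE : ∀ e ∈ S, IsEpsilon (f e)) (hf : StrictMonoOn f S)
    {z : Ordinal.{0}} (hzS : z ∈ S) {x : Ordinal.{0}} (hxz : x < z)
    (hx : Ep x ⊆ S) : subst f x < f z := by
  induction x using WellFoundedLT.induction with
  | _ x ih =>
  have hfz : IsEpsilon (f z) := hfE z hzS
  by_cases hxε : IsEpsilon x
  · rw [subst_of_isEpsilon_s8 f hxε]
    exact hf (hx (by simp [Ep_of_isEpsilon_s8 hxε])) hzS hxz
  rcases eq_or_ne x 0 with rfl | hx0
  · rw [subst_zero]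
    exact pos_iff_ne_zero.2 hfz.ne_zero
  obtain ⟨a, c, r, hc, hcω, hr, rfl⟩ := exists_opow_mul_add_eq hx0
  rw [Ep_opow_mul_add_of_lt hc hcω hr, Set.union_subset_iff] at hx
  have ha := lt_of_opow_le_of_not_isEpsilon (opow_le_opow_mul_add r hc) hxε
  have hr' := lt_opow_mul_add hc hr
  rw [subst_opow_mul_add_of_lt hfE hx.1 hx.2 hcω hr, ← hfz]
  exact isPrincipal_add_omega0_opow _ (opow_mul_lt_opow hcω (ih a ha (ha.trans hxz) hx.1))
    ((ih r hr' (hr'.trans hxz) hx.2).trans_eq hfz.symm)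

theorem subst_lt_opow_subst (hfE : ∀ e ∈ S, IsEpsilon (f e)) {a : Ordinal.{0}}
    (hR : ∀ b < a, Ep b ⊆ S → subst f b < subst f a) {x : Ordinal.{0}} (hxa : x < ω ^ a)
    (hx : Ep x ⊆ S) : subst f x < ω ^ subst f a := by
  induction x using WellFoundedLT.induction with
  | _ x ih =>
  rcases eq_or_ne x 0 with rfl | hx0
  · rw [subst_zero]
    exact opow_pos _ omega0_pos
  obtain ⟨l, c, r, hc, hcω, hr, rfl⟩ := exists_opow_mul_add_eq hx0
  rw [Ep_opow_mul_add_of_lt hc hcω hr, Set.union_subset_iff] at hx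
  have hla : l < a :=
    (opow_lt_opow_iff_right one_lt_omega0).1 ((opow_le_opow_mul_add r hc).trans_lt hxa)
  have hr' := lt_opow_mul_add hc hr
  rw [subst_opow_mul_add_of_lt hfE hx.1 hx.2 hcω hr]
  exact isPrincipal_add_omega0_opow _ (opow_mul_lt_opow hcω (hR l hla hx.1))
    (ih r hr' (hr'.trans hxa) hx.2)

theorem strictMonoOn_subst (hfE : ∀ e ∈ S, IsEpsilon (f e)) (hf : StrictMonoOn f S) :
    StrictMonoOn (subst f) {x | Ep x ⊆ S} := by
  intro x hx z hz hxz
  induction z using WellFoundedLT.induction generalizing x with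
  | _ z ih =>
  by_cases hzε : IsEpsilon z
  · rw [subst_of_isEpsilon_s8 f hzε]
    exact subst_lt_apply_of_lt hfE hf (hz (by simp [Ep_of_isEpsilon_s8 hzε])) hxz hx
  obtain ⟨a, c, r, hc, hcω, hr, rfl⟩ := exists_opow_mul_add_eq (pos_of_gt hxz).ne'
  have hzS : Ep a ⊆ S ∧ Ep r ⊆ S := by
    rw [← Set.union_subset_iff, ← Ep_opow_mul_add_of_lt hc hcω hr]
    exact hz
  have ha := lt_of_opow_le_of_not_isEpsilon (opow_le_opow_mul_add r hc) hzε
  have hd : x / ω ^ a ≤ c := by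
    simpa [mul_add_div _ (opow_ne_zero a omega0_ne_zero), div_eq_zero_of_lt hr]
      using div_le_left hxz.le (ω ^ a)
  have hs : x % ω ^ a < ω ^ a := mod_lt x (opow_ne_zero a omega0_ne_zero)
  rw [← div_add_mod x (ω ^ a)] at hx hxz ⊢
  have hsS : Ep (x % ω ^ a) ⊆ S :=
    (Ep_subset_Ep_opow_mul_add_of_lt (hd.trans_lt hcω) hs).trans hx
  rw [subst_opow_mul_add_of_lt hfE hzS.1 hsS (hd.trans_lt hcω) hs,
    subst_opow_mul_add_of_lt hfE hzS.1 hzS.2 hcω hr]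
  rcases hd.lt_or_eq with hd | hd
  · have hR : ∀ b < a, Ep b ⊆ S → subst f b < subst f a :=
      fun b hb hbS => ih a ha hbS hzS.1 hb
    exact (opow_mul_add_lt_opow_mul (subst_lt_opow_subst hfE hR hs hsS) hd).trans_le le_self_add
  · rw [hd] at hxz ⊢
    exact add_lt_add_right (ih r (lt_opow_mul_add hc hr) hsS hzS.2 (lt_of_add_lt_add_left hxz)) _

theorem subst_opow_mul_add (hfE : ∀ e ∈ S, IsEpsilon (f e)) (hf : StrictMonoOn f S)
    {a c y : Ordinal.{0}} (ha : Ep a ⊆ S) (hyS : Ep y ⊆ S) (hcω : c < ω) :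
    subst f (ω ^ a * c + y) = ω ^ subst f a * c + subst f y := by
  rcases eq_or_ne y 0 with rfl | hy
  · simpa [subst_zero] using
      subst_opow_mul_add_of_lt hfE ha (by simp [Ep_zero]) hcω (opow_pos a omega0_pos)
  obtain ⟨b, d, s, hd, hdω, hs, rfl⟩ := exists_opow_mul_add_eq hy
  have hbs : Ep b ⊆ S ∧ Ep s ⊆ S := by
    rw [← Set.union_subset_iff, ← Ep_opow_mul_add_of_lt hd hdω hs]
    exact hyS
  rcases lt_trichotomy b a with hba | rfl | hab
  · exact subst_opow_mul_add_of_lt hfE ha hyS hcω (opow_mul_add_lt_opow hdω hs hba)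
  · rw [← add_assoc, ← mul_add,
      subst_opow_mul_add_of_lt hfE ha hbs.2 (isPrincipal_add_omega0 hcω hdω) hs,
      subst_opow_mul_add_of_lt hfE ha hbs.2 hdω hs, mul_add, add_assoc]
  · have hsubst : subst f a < subst f b := strictMonoOn_subst hfE hf ha hbs.1 hab
    rw [add_of_omega0_opow_le (opow_mul_lt_opow hcω hab) (opow_le_opow_mul_add s hd),
      subst_opow_mul_add_of_lt hfE hbs.1 hbs.2 hdω hs,
      add_of_omega0_opow_le (opow_mul_lt_opow hcω hsubst) (opow_le_opow_mul_add _ hd)]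

theorem subst_add (hfE : ∀ e ∈ S, IsEpsilon (f e)) (hf : StrictMonoOn f S) {x y : Ordinal.{0}}
    (hx : Ep x ⊆ S) (hy : Ep y ⊆ S) : subst f (x + y) = subst f x + subst f y := by
  induction x using WellFoundedLT.induction with
  | _ x ih =>
  rcases eq_or_ne x 0 with rfl | hx0
  · simp [subst_zero]
  obtain ⟨a, c, r, hc, hcω, hr, rfl⟩ := exists_opow_mul_add_eq hx0
  rw [Ep_opow_mul_add_of_lt hc hcω hr, Set.union_subset_iff] at hx
  have hry : Ep (r + y) ⊆ S := (Ep_add_subset r y).trans (Set.union_subset hx.2 hy)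
  rw [add_assoc, subst_opow_mul_add hfE hf hx.1 hry hcω, ih r (lt_opow_mul_add hc hr) hx.2,
    subst_opow_mul_add_of_lt hfE hx.1 hx.2 hcω hr, add_assoc]

end

theorem stmt8_general (S : Set Ordinal.{0}) (f : Ordinal → Ordinal)
    (hfE : ∀ e ∈ S, IsEpsilon (f e))
    (hf : StrictMonoOn f S)
    (x y : Ordinal) (hx : Ep x ⊆ S) (hy : Ep y ⊆ S) :
    Ep (x + y) ⊆ S ∧ subst f (x + y) = subst f x + subst f y :=
  ⟨(Ep_add_subset x y).trans (Set.union_subset hx hy), subst_add hfE hf hx hy⟩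

theorem stmt8 (S : Set Ordinal.{0}) (f : Ordinal → Ordinal)
    (hS : ∀ e ∈ S, IsEpsilon e) (hfE : ∀ e ∈ S, IsEpsilon (f e))
    (hf : StrictMonoOn f S)
    (x y : Ordinal) (hx : Ep x ⊆ S) (hy : Ep y ⊆ S) :
    Ep (x + y) ⊆ S ∧ subst f (x + y) = subst f x + subst f y :=
  stmt8_general S f hfE hf x y hx hy
end
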